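/- arXiv:2109.11477 — 3 statements merged into one kernel-verified Lean document; each statement's English description precedes it below -/
import Mathlib

section
/- Let (Ω, F, (F_t)_{t ∈ [0,∞)}, P) be a filtered probability space satisfying the usual conditions, let E be a measurable space, and let X, X₀, X₁ ⊆ E be measurable sets with X₀, X₁ ⊆ X. Let ξ, ξ̂ : [0,∞) → Ω → E be adapted stochastic processes such that ξ̂_t(ω) ∈ X for all t ≥ 0 and almost every ω, and such that (ξ_0, ξ̂_0) ∈ X₀ × X₀ almost surely. Let B : E × E → ℝ be a measurable nonnegative function, let γ ∈ [0,1) and c ≥ 0 be constants, and suppose: (i) B(x, x̂) ≤ γ for all (x, x̂) ∈ X₀ × X₀; (ii) B(x, x̂) ≥ 1 for all (x, x̂) ∈ X₁ × X; (iii) the real-valued process t ↦ B(ξ_t, ξ̂_t) − c·t has right-continuous sample paths and is a supermartingale with respect to (F_t). Then for every T ≥ 0, the probability that ξ reaches the region X₁ within the time horizon [0, T), i.e. P( { ω : ∃ t ∈ [0, T), ξ_t(ω) ∈ X₁ } ), is upper bounded by γ + c·T. -/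
open MeasureTheory Set Finset
open scoped NNReal ENNReal

/-- Doob-type maximal inequality for nonnegative supermartingales indexed by `ℕ`:
`ε * μ {sup_{k ≤ n} f k ≥ ε} ≤ E[f 0]`. -/
lemma supermartingale_maximal_ineq {Ω : Type*} {m0 : MeasurableSpace Ω} {μ : Measure Ω}
    [IsFiniteMeasure μ] {𝒢 : Filtration ℕ m0} {f : ℕ → Ω → ℝ}
    (hsup : Supermartingale f 𝒢 μ) (hnonneg : ∀ i ω, 0 ≤ f i ω) {ε : ℝ≥0} (n : ℕ) :
    (ε : ℝ≥0∞) * μ {ω | (ε : ℝ) ≤ (range (n + 1)).sup' nonempty_range_add_one fun k => f k ω} ≤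
      ENNReal.ofReal ((∫ ω, f 0 ω ∂μ)) := by
  set τ : Ω → WithTop ℕ := fun ω => (hittingBtwn f {y : ℝ | (ε : ℝ) ≤ y} 0 n ω : ℕ) with hτ_def
  have hτ : IsStoppingTime 𝒢 τ :=
    Adapted.isStoppingTime_hittingBtwn hsup.stronglyAdapted.adapted measurableSet_Ici
  have hτ_le : ∀ ω, τ ω ≤ n := fun ω => WithTop.coe_le_coe.mpr (hittingBtwn_le ω)
  -- integrability of the stopped value
  have hsv_int : Integrable (stoppedValue f τ) μ := by
    have := (hsup.neg.integrable_stoppedValue hτ hτ_le).neg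
    have heq : stoppedValue f τ = -stoppedValue (-f) τ := by
      funext ω; simp [stoppedValue]
    rw [heq]
    simpa using this
  -- expected stopped value bound
  have hmono : (∫ ω, stoppedValue f τ ω ∂μ) ≤ (∫ ω, f 0 ω ∂μ) := by
    have h := hsup.neg.expected_stoppedValue_mono (isStoppingTime_const 𝒢 (0 : ℕ)) hτ
      (fun ω => WithTop.coe_le_coe.mpr (Nat.zero_le _)) hτ_le
    have h1 : stoppedValue (-f) (fun _ => ((0 : ℕ) : WithTop ℕ)) = -f 0 := stoppedValue_const _ _
    have h2 : stoppedValue (-f) τ = -stoppedValue f τ := by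
      funext ω; simp [stoppedValue]
    rw [h2] at h
    change ∫ x, (-f 0) x ∂μ ≤ _ at h
    simp only [Pi.neg_apply, integral_neg, neg_le_neg_iff] at h
    exact h
  set S := {ω | (ε : ℝ) ≤ (range (n + 1)).sup' nonempty_range_add_one fun k => f k ω} with hS_def
  have hS_meas : MeasurableSet S :=
    measurableSet_le measurable_const (Finset.measurable_range_sup'' fun k _ =>
      ((hsup.stronglyAdapted k).measurable).le (𝒢.le k))
  have hkey : ∀ ω ∈ S, (ε : ℝ) ≤ stoppedValue f τ ω := by
    intro ω hω
    simp_rw [hS_def, Set.mem_setOf_eq, le_sup'_iff, Finset.mem_range, Nat.lt_succ_iff] at hω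
    refine stoppedValue_hittingBtwn_mem ?_
    obtain ⟨j, hj₁, hj₂⟩ := hω
    exact ⟨j, ⟨Nat.zero_le _, hj₁⟩, hj₂⟩
  have h := setIntegral_ge_of_const_le hS_meas (measure_ne_top _ _) hkey hsv_int.integrableOn
  have h2 : ∫ ω in S, stoppedValue f τ ω ∂μ ≤ (∫ ω, stoppedValue f τ ω ∂μ) :=
    setIntegral_le_integral hsv_int (Filter.Eventually.of_forall fun ω => hnonneg _ _)
  have hfinal : (ε : ℝ) * (μ S).toReal ≤ (∫ ω, f 0 ω ∂μ) := le_trans (by rw [smul_eq_mul, mul_comm] at h; exact h) (le_trans h2 hmono)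
  rw [ENNReal.le_ofReal_iff_toReal_le]
  · rw [ENNReal.toReal_mul]
    simpa using hfinal
  · exact ENNReal.mul_ne_top (by simp) (measure_ne_top _ _)
  · exact le_trans (mul_nonneg ε.coe_nonneg ENNReal.toReal_nonneg) hfinal

/-- Theorem 1 of the paper: control barrier function reachability bound.
If `B` is a nonnegative measurable function on the augmented state space with
`B ≤ γ` on `X₀ × X₀`, `B ≥ 1` on `X₁ × X`, and `t ↦ B(ξ t, ξ̂ t) - c * t` is a
right-continuous supermartingale along the augmented process `(ξ, ξ̂)` (starting
in `X₀ × X₀`, with `ξ̂` remaining in `X`), then the probability that `ξ` reaches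
`X₁` within the time horizon `[0, T)` is upper bounded by `γ + c * T`. -/
theorem barrier_reachability_bound
    {Ω : Type*} {m0 : MeasurableSpace Ω} {μ : Measure Ω} [IsProbabilityMeasure μ]
    (ℱ : Filtration ℝ≥0 m0)
    -- usual conditions: right-continuity of the filtration
    (hℱ_right : ∀ t : ℝ≥0,
      (ℱ t : MeasurableSpace Ω) = ⨅ s ∈ Set.Ioi t, (ℱ s : MeasurableSpace Ω))
    -- usual conditions: completeness (each `ℱ t` contains all `μ`-null sets)
    (hℱ_complete : ∀ (t : ℝ≥0) (s : Set Ω), μ s = 0 → MeasurableSet[ℱ t] s)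
    {E : Type*} [MeasurableSpace E]
    (X X₀ X₁ : Set E)
    (hX : MeasurableSet X) (hX₀ : MeasurableSet X₀) (hX₁ : MeasurableSet X₁)
    (hX₀X : X₀ ⊆ X) (hX₁X : X₁ ⊆ X)
    (ξ ξhat : ℝ≥0 → Ω → E)
    (hξ_adapted : ∀ t, Measurable[ℱ t] (ξ t))
    (hξhat_adapted : ∀ t, Measurable[ℱ t] (ξhat t))
    (hξhat_in_X : ∀ᵐ ω ∂μ, ∀ t : ℝ≥0, ξhat t ω ∈ X)
    (h_init : ∀ᵐ ω ∂μ, ξ 0 ω ∈ X₀ ∧ ξhat 0 ω ∈ X₀)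
    (B : E × E → ℝ) (hB_meas : Measurable B) (hB_nonneg : ∀ z, 0 ≤ B z)
    (γ c : ℝ) (hγ₀ : 0 ≤ γ) (hγ₁ : γ < 1) (hc : 0 ≤ c)
    -- condition (i): `B ≤ γ` on `X₀ × X₀`
    (h₁ : ∀ x ∈ X₀, ∀ xhat ∈ X₀, B (x, xhat) ≤ γ)
    -- condition (ii): `B ≥ 1` on `X₁ × X`
    (h₂ : ∀ x ∈ X₁, ∀ xhat ∈ X, 1 ≤ B (x, xhat))
    -- condition (iii): `t ↦ B(ξ t, ξ̂ t) - c * t` has right-continuous sample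
    -- paths and is a supermartingale
    (h₃_rightCont : ∀ ω t,
      ContinuousWithinAt (fun s : ℝ≥0 => B (ξ s ω, ξhat s ω) - c * (s : ℝ))
        (Set.Ici t) t)
    (h₃_supermartingale :
      Supermartingale (fun (t : ℝ≥0) ω => B (ξ t ω, ξhat t ω) - c * (t : ℝ)) ℱ μ) :
    ∀ T : ℝ≥0,
      μ {ω | ∃ t ∈ Set.Ico (0 : ℝ≥0) T, ξ t ω ∈ X₁} ≤
        ENNReal.ofReal (γ + c * (T : ℝ)) := by
  intro T
  by_cases hT0 : T = 0
  · subst hT0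
    have hempty : {ω : Ω | ∃ t ∈ Set.Ico (0 : ℝ≥0) 0, ξ t ω ∈ X₁} = ∅ := by
      ext ω; simp [Set.mem_Ico]
    rw [hempty]
    simp
  have hT : 0 < T := pos_iff_ne_zero.mpr hT0
  have hTR : (0 : ℝ) < T := hT
  -- the supermartingale shifted by the constant `c * T`, which is nonnegative on `[0, T]`
  set N : ℝ≥0 → Ω → ℝ := fun t ω => (B (ξ t ω, ξhat t ω) - c * (t : ℝ)) + c * T with hN_def
  have hN_super : Supermartingale N ℱ μ :=
    h₃_supermartingale.add (martingale_const ℱ μ (c * (T : ℝ))).supermartingale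
  have hN_nonneg : ∀ t : ℝ≥0, t ≤ T → ∀ ω, 0 ≤ N t ω := by
    intro t ht ω
    have h1 := hB_nonneg (ξ t ω, ξhat t ω)
    have h2 : c * (t : ℝ) ≤ c * T := mul_le_mul_of_nonneg_left (by exact_mod_cast ht) hc
    simp only [hN_def]; linarith
  have hint0 : Integrable (N 0) μ := hN_super.integrable 0
  have hEN0 : (∫ ω, N 0 ω ∂μ) ≤ γ + c * T := by
    have hle : ∀ᵐ ω ∂μ, N 0 ω ≤ γ + c * T := by
      filter_upwards [h_init] with ω hω
      have := h₁ _ hω.1 _ hω.2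
      simp only [hN_def]
      push_cast
      linarith
    calc (∫ ω, N 0 ω ∂μ) ≤ ∫ _, (γ + c * T) ∂μ :=
          integral_mono_ae hint0 (integrable_const _) hle
      _ = γ + c * T := by simp
  -- the dyadic grids
  set κ : ℕ → ℕ → ℝ≥0 := fun n k => ((min k (2 ^ n) : ℕ) : ℝ≥0) * T / 2 ^ n with hκ_def
  have hκ_mono : ∀ n, Monotone (κ n) := by
    intro n i j hij
    simp only [hκ_def]
    gcongr
  have hκ_le : ∀ n k, κ n k ≤ T := by
    intro n k
    simp only [hκ_def]
    rw [div_le_iff₀ (by positivity)]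
    calc ((min k (2 ^ n) : ℕ) : ℝ≥0) * T ≤ ((2 ^ n : ℕ) : ℝ≥0) * T := by
          gcongr; exact_mod_cast min_le_right _ _
      _ = T * 2 ^ n := by push_cast; ring
  have hκ0 : ∀ n, κ n 0 = 0 := by intro n; simp [hκ_def]
  have hκ_eq : ∀ n k, k ≤ 2 ^ n → κ n k = (k : ℝ≥0) * T / 2 ^ n := by
    intro n k hk
    simp only [hκ_def]
    rw [min_eq_left hk]
  -- it suffices to prove the bound after multiplication by any `δ < 1`
  have key : ∀ δ : ℝ≥0, δ < 1 →
      (δ : ℝ≥0∞) * μ {ω | ∃ t ∈ Set.Ico (0 : ℝ≥0) T, ξ t ω ∈ X₁} ≤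
        ENNReal.ofReal (γ + c * T) := by
    intro δ hδ1
    have hδ1R : (δ : ℝ) < 1 := hδ1
    -- the dyadic approximation events
    set D : ℕ → Set Ω := fun n =>
      {ω | (δ : ℝ) ≤ (Finset.range (2 ^ n + 1)).sup' Finset.nonempty_range_add_one
        fun k => N (κ n k) ω} with hD_def
    have hD_mono : Monotone D := by
      refine monotone_nat_of_le_succ fun n => ?_
      intro ω hω
      simp only [hD_def, Set.mem_setOf_eq, Finset.le_sup'_iff, Finset.mem_range,
        Nat.lt_succ_iff] at hω ⊢
      obtain ⟨k, hk, hkN⟩ := hω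
      refine ⟨2 * k, by omega, ?_⟩
      have : κ (n + 1) (2 * k) = κ n k := by
        rw [hκ_eq n k hk, hκ_eq (n + 1) (2 * k) (by omega)]
        push_cast
        rw [pow_succ]
        rw [show (2 : ℝ≥0) * k * T = k * T * 2 by ring,
          mul_div_mul_right _ _ (two_ne_zero)]
      rwa [this]
    -- per-level maximal inequality
    have hDn : ∀ n, (δ : ℝ≥0∞) * μ (D n) ≤ ENNReal.ofReal (γ + c * T) := by
      intro n
      set 𝒢n : Filtration ℕ m0 :=
        ⟨fun i => ℱ (κ n i), fun i j hij => ℱ.mono (hκ_mono n hij), fun i => ℱ.le _⟩ with h𝒢n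
      have hfn : Supermartingale (fun i => N (κ n i)) 𝒢n μ :=
        ⟨fun i => hN_super.stronglyAdapted (κ n i),
          fun i j hij => hN_super.2.1 _ _ (hκ_mono n hij),
          fun i => hN_super.integrable _⟩
      have hmax := supermartingale_maximal_ineq hfn
        (fun i ω => hN_nonneg _ (hκ_le n i) ω) (ε := δ) (2 ^ n)
      have h00 : (∫ ω, N (κ n 0) ω ∂μ) = ∫ ω, N 0 ω ∂μ := by rw [hκ0]
      calc (δ : ℝ≥0∞) * μ (D n)
          ≤ ENNReal.ofReal (∫ ω, N (κ n 0) ω ∂μ) := hmax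
        _ ≤ ENNReal.ofReal (γ + c * T) := by
            rw [h00]; exact ENNReal.ofReal_le_ofReal hEN0
    -- right-continuity: the reach event is a.e. contained in the union of the `D n`
    set G : Set Ω := {ω | ∀ t : ℝ≥0, ξhat t ω ∈ X} with hG_def
    have hGc : μ Gᶜ = 0 := by
      rw [ae_iff] at hξhat_in_X
      exact hξhat_in_X
    have hsub : {ω | ∃ t ∈ Set.Ico (0 : ℝ≥0) T, ξ t ω ∈ X₁} ⊆ Gᶜ ∪ ⋃ n, D n := by
      intro ω hω
      by_cases hωG : ω ∈ G
      swap
      · exact Or.inl hωG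
      obtain ⟨t, ⟨-, htT⟩, hξt⟩ := hω
      refine Or.inr ?_
      have htTR : (t : ℝ) < T := htT
      have hBt : 1 ≤ B (ξ t ω, ξhat t ω) := h₂ _ hξt _ (hωG t)
      have hcont := h₃_rightCont ω t
      have hδpos : (0 : ℝ) < 1 - δ := by linarith
      have hev : ∀ᶠ s in nhdsWithin t (Set.Ici t),
          (B (ξ t ω, ξhat t ω) - c * (t : ℝ)) - (1 - δ) <
            B (ξ s ω, ξhat s ω) - c * (s : ℝ) :=
        hcont.eventually (lt_mem_nhds (sub_lt_self _ hδpos))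
      rw [Filter.eventually_iff, Metric.mem_nhdsWithin_iff] at hev
      obtain ⟨ρ, hρpos, hball⟩ := hev
      obtain ⟨n, hn⟩ := pow_unbounded_of_one_lt ((T : ℝ) / ρ) one_lt_two
      have h2n : (0 : ℝ) < 2 ^ n := by positivity
      set k : ℕ := ⌈(t : ℝ) * 2 ^ n / T⌉₊ with hk_def
      have hk2 : k ≤ 2 ^ n := by
        rw [hk_def, Nat.ceil_le]
        rw [div_le_iff₀ hTR]
        push_cast
        nlinarith
      have hq_eq : ((κ n k : ℝ≥0) : ℝ) = (k : ℝ) * T / 2 ^ n := by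
        rw [hκ_eq n k hk2]
        push_cast
        ring
      have htq : (t : ℝ) ≤ κ n k := by
        rw [hq_eq, le_div_iff₀ h2n]
        have h1 : (t : ℝ) * 2 ^ n / T ≤ k := Nat.le_ceil _
        rw [div_le_iff₀ hTR] at h1
        nlinarith
      have hqlt : ((κ n k : ℝ≥0) : ℝ) < t + T / 2 ^ n := by
        rw [hq_eq, div_lt_iff₀ h2n]
        have hexp : ((t : ℝ) + T / 2 ^ n) * 2 ^ n = t * 2 ^ n + T := by field_simp
        rw [hexp]
        have h1 : (k : ℝ) < (t : ℝ) * 2 ^ n / T + 1 :=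
          Nat.ceil_lt_add_one (by positivity)
        have h1' := mul_lt_mul_of_pos_right h1 hTR
        have hsimp : ((t : ℝ) * 2 ^ n / T + 1) * T = t * 2 ^ n + T := by field_simp
        linarith
      have hTn : (T : ℝ) / 2 ^ n < ρ := by
        rw [div_lt_iff₀ h2n]
        rw [div_lt_iff₀ hρpos] at hn
        nlinarith
      have hmem : κ n k ∈ Metric.ball t ρ ∩ Set.Ici t := by
        constructor
        · rw [Metric.mem_ball, NNReal.dist_eq, abs_of_nonneg (by linarith)]
          linarith
        · exact_mod_cast htq
      have hFq := hball hmem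
      simp only [Set.mem_setOf_eq] at hFq
      have hct : c * (t : ℝ) ≤ c * T := mul_le_mul_of_nonneg_left (le_of_lt htTR) hc
      have hNq : (δ : ℝ) ≤ N (κ n k) ω := by
        simp only [hN_def]
        linarith
      refine Set.mem_iUnion.mpr ⟨n, ?_⟩
      simp only [hD_def, Set.mem_setOf_eq, Finset.le_sup'_iff, Finset.mem_range,
        Nat.lt_succ_iff]
      exact ⟨k, hk2, hNq⟩
    -- put things together
    have hμA : μ {ω | ∃ t ∈ Set.Ico (0 : ℝ≥0) T, ξ t ω ∈ X₁} ≤ μ (⋃ n, D n) := by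
      calc μ {ω | ∃ t ∈ Set.Ico (0 : ℝ≥0) T, ξ t ω ∈ X₁}
          ≤ μ (Gᶜ ∪ ⋃ n, D n) := measure_mono hsub
        _ ≤ μ Gᶜ + μ (⋃ n, D n) := measure_union_le _ _
        _ = μ (⋃ n, D n) := by rw [hGc, zero_add]
    calc (δ : ℝ≥0∞) * μ {ω | ∃ t ∈ Set.Ico (0 : ℝ≥0) T, ξ t ω ∈ X₁}
        ≤ (δ : ℝ≥0∞) * μ (⋃ n, D n) := by gcongr
      _ = (δ : ℝ≥0∞) * ⨆ n, μ (D n) := by rw [hD_mono.measure_iUnion]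
      _ = ⨆ n, (δ : ℝ≥0∞) * μ (D n) := by rw [ENNReal.mul_iSup]
      _ ≤ ENNReal.ofReal (γ + c * T) := iSup_le hDn
  -- conclude by letting `δ → 1`
  have hfin : (1 : ℝ≥0∞) * μ {ω | ∃ t ∈ Set.Ico (0 : ℝ≥0) T, ξ t ω ∈ X₁} ≤
      ENNReal.ofReal (γ + c * T) := by
    apply ENNReal.mul_le_of_forall_lt
    intro a' ha' b' hb'
    have ha'top : a' ≠ ⊤ := ne_top_of_lt (lt_of_lt_of_le ha' le_top)
    have ha'eq : a' = (a'.toNNReal : ℝ≥0∞) := (ENNReal.coe_toNNReal ha'top).symm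
    have ha'1 : a'.toNNReal < 1 := by
      rw [ha'eq] at ha'
      exact_mod_cast ha'
    calc a' * b' ≤ a' * μ {ω | ∃ t ∈ Set.Ico (0 : ℝ≥0) T, ξ t ω ∈ X₁} := by
          gcongr
      _ ≤ ENNReal.ofReal (γ + c * T) := by rw [ha'eq]; exact key _ ha'1
  rwa [one_mul] at hfin
end

section
/- Let M be a deterministic finite automaton over an alphabet Π with state set Q, start state q₀, transition function δ : Q → Π → Q, and accepting set F ⊆ Q. If a word w = (w_0, …, w_{k−1}) ∈ Π^k is accepted by M, then there exist n ≤ k, a sequence of states s_0, s_1, …, s_n ∈ Q with s_0 = q₀ and s_n ∈ F and s_i ≠ s_{i+1} for every 0 ≤ i < n, and a word v = (v_0, …, v_{n−1}) ∈ Π^n that is a sublist (order-preserving subsequence) of w, such that δ(s_i, v_i) = s_{i+1} for every 0 ≤ i < n. In other words, every accepted word induces an accepting state run of M with no self-loops (no two consecutive states equal) whose label word is a subsequence of w. -/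
theorem dfa_run_aux {A Q : Type*} (M : DFA A Q) (w : List A) (q : Q) :
    ∃ v : List A, ∃ s : Fin (v.length + 1) → Q,
      v.Sublist w ∧
      s 0 = q ∧
      s (Fin.last v.length) = M.evalFrom q w ∧
      ∀ i : Fin v.length,
        s i.castSucc ≠ s i.succ ∧ M.step (s i.castSucc) (v.get i) = s i.succ := by
  induction w generalizing q with
  | nil => exact ⟨[], fun _ => q, List.Sublist.refl _, rfl, rfl, fun i => i.elim0⟩
  | cons a w ih =>
    obtain ⟨v, s, hsub, h0, hlast, hstep⟩ := ih (M.step q a)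
    by_cases hq : M.step q a = q
    · refine ⟨v, s, hsub.cons a, ?_, ?_, hstep⟩
      · rw [h0, hq]
      · rw [hlast]
        simp [DFA.evalFrom]
    · refine ⟨a :: v, Fin.cons q s, hsub.cons₂ a, rfl, ?_, ?_⟩
      · have : Fin.last (a :: v).length = Fin.succ (Fin.last v.length) := rfl
        rw [this, Fin.cons_succ, hlast]
        simp [DFA.evalFrom]
      · intro i
        refine Fin.cases ?_ ?_ i
        · simp only [Fin.castSucc_zero, Fin.cons_zero, Fin.cons_succ, h0]
          exact ⟨fun h => hq h.symm, rfl⟩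
        · intro j
          have h1 : (Fin.succ j).castSucc = Fin.succ j.castSucc := rfl
          rw [h1, Fin.cons_succ, Fin.cons_succ]
          exact hstep j

/-- Every word accepted by a DFA induces an accepting state run with no self-loops
(no two consecutive states equal) whose label word is an (order-preserving)
subsequence of the accepted word. Note that the length bound `n ≤ k` is implied by
`v.Sublist w`. -/
theorem dfa_accepts_run_without_selfLoops
    {A Q : Type*} [Fintype Q] (M : DFA A Q) (w : List A)
    (hw : w ∈ M.accepts) :
    ∃ v : List A, ∃ s : Fin (v.length + 1) → Q,
      v.Sublist w ∧
      s 0 = M.start ∧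
      s (Fin.last v.length) ∈ M.accept ∧
      ∀ i : Fin v.length,
        s i.castSucc ≠ s i.succ ∧ M.step (s i.castSucc) (v.get i) = s i.succ := by
  obtain ⟨v, s, hsub, h0, hlast, hstep⟩ := dfa_run_aux M w M.start
  exact ⟨v, s, hsub, h0, hlast ▸ hw, hstep⟩
end

section
/- Let M be a deterministic finite automaton over an alphabet Π with state set Q, start state q₀, transition function δ : Q → Π → Q, and accepting set F ⊆ Q, and suppose the word w = (w_0, …, w_{k−1}) ∈ Π^k with k ≥ 1 is accepted by M and the first transition changes state, i.e. δ(q₀, w_0) ≠ q₀. Then there exist n with 1 ≤ n ≤ k, states s_0, …, s_n ∈ Q with s_0 = q₀, s_n ∈ F, and s_i ≠ s_{i+1} for every 0 ≤ i < n, and a word v = (v_0, …, v_{n−1}) that is a sublist of w with δ(s_i, v_i) = s_{i+1} for all 0 ≤ i < n, and moreover v_0 = w_0; that is, the induced self-loop–free accepting run starts with an edge labeled by the first letter of w. -/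
/-- Prepend a state `q` with edge labeled `a` to a self-loop-free run `s`. -/
lemma prepend_run {A Q : Type*} (M : DFA A Q) (q : Q) (a : A) (v : List A)
    (s : Fin (v.length + 1) → Q)
    (hne : q ≠ s 0) (hstep : M.step q a = s 0)
    (hrun : ∀ i : Fin v.length,
      s i.castSucc ≠ s i.succ ∧ M.step (s i.castSucc) (v.get i) = s i.succ) :
    ∃ s' : Fin (v.length + 2) → Q, s' 0 = q ∧
      s' (Fin.last (v.length + 1)) = s (Fin.last v.length) ∧
      ∀ i : Fin (v.length + 1),
        s' i.castSucc ≠ s' i.succ ∧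
          M.step (s' i.castSucc) ((a :: v).get i) = s' i.succ := by
  refine ⟨Fin.cases q s, by simp, ?_, ?_⟩
  · exact Fin.cases_succ (motive := fun _ => Q) (Fin.last v.length)
  · intro i
    induction i using Fin.cases with
    | zero =>
      constructor
      · exact hne
      · exact hstep
    | succ j =>
      have h := hrun j
      constructor
      · exact h.1
      · have : ((a :: v).get j.succ : A) = v.get j := by simp
        exact h.2

lemma aux_run {A Q : Type*} (M : DFA A Q) (w : List A) :
    ∀ q : Q, M.evalFrom q w ∈ M.accept →
    ∃ v : List A, ∃ s : Fin (v.length + 1) → Q,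
      v.Sublist w ∧ s 0 = q ∧ s (Fin.last v.length) ∈ M.accept ∧
      ∀ i : Fin v.length,
        s i.castSucc ≠ s i.succ ∧ M.step (s i.castSucc) (v.get i) = s i.succ := by
  induction w with
  | nil =>
    intro q hq
    exact ⟨[], fun _ => q, List.Sublist.refl _, rfl, by simpa using hq, fun i => i.elim0⟩
  | cons b w ih =>
    intro q hq
    have hq' : M.evalFrom (M.step q b) w ∈ M.accept := hq
    by_cases hb : M.step q b = q
    · obtain ⟨v, s, hsub, h0, hl, hr⟩ := ih q (by rwa [hb] at hq')
      exact ⟨v, s, hsub.trans (List.sublist_cons_self b w), h0, hl, hr⟩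
    · obtain ⟨v, s, hsub, h0, hl, hr⟩ := ih (M.step q b) hq'
      obtain ⟨s', h0', hl', hr'⟩ := prepend_run M q b v s (by rw [h0]; exact Ne.symm hb)
        (by rw [h0]) hr
      exact ⟨b :: v, s', hsub.cons_cons b, h0', by simp only [List.length_cons]; rwa [hl'], hr'⟩

/-- Refined collapse lemma: if the nonempty word `a :: w` is accepted by the DFA `M`
and its first transition changes state (`M.step M.start a ≠ M.start`), then there is
an induced self-loop–free accepting state run whose label word `a :: v'` is nonempty,
is a sublist of `a :: w`, and starts with the first letter `a` of the word. -/
theorem dfa_accepts_run_without_selfLoops_firstLetter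
    {A Q : Type*} [Fintype Q] (M : DFA A Q) (a : A) (w : List A)
    (hw : a :: w ∈ M.accepts)
    (hfirst : M.step M.start a ≠ M.start) :
    ∃ v' : List A, ∃ s : Fin (v'.length + 2) → Q,
      (a :: v').Sublist (a :: w) ∧
      s 0 = M.start ∧
      s (Fin.last (v'.length + 1)) ∈ M.accept ∧
      ∀ i : Fin (v'.length + 1),
        s i.castSucc ≠ s i.succ ∧
          M.step (s i.castSucc) ((a :: v').get i) = s i.succ := by
  have hq' : M.evalFrom (M.step M.start a) w ∈ M.accept := hw
  obtain ⟨v, s, hsub, h0, hl, hr⟩ := aux_run M w (M.step M.start a) hq'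
  obtain ⟨s', h0', hl', hr'⟩ := prepend_run M M.start a v s
    (by rw [h0]; exact Ne.symm hfirst) (by rw [h0]) hr
  exact ⟨v, s', hsub.cons_cons a, h0', by rwa [hl'], hr'⟩
end
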